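/- Necessity of the proportionality constant (subtractive). Fix m, S and β with 0 < β ≤ 1, a common central feature c : F (i.e. c1 = c2 = c), and nonempty finite multisets X1, X2 over F; assume the subtractive weights are strictly positive, i.e. w(c,x;X1) > 0 for every x ∈ M(X1) and w(c,x;X2) > 0 for every x ∈ M(X2). If for every g : F → ℝ, h(g; c, X1) = h(g; c, X2), then M(X1) = M(X2) and there exists a real q > 0 such that for every x ∈ M(X1), q · μ_{X1}(x) · (E(c,X1) − β·exp(S(c,x))) = μ_{X2}(x) · (E(c,X2) − β·exp(S(c,x))). -/

import Mathlib

namespace SAT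

variable {F : Type*}

/-- `E(c,X) = Σ_{y∈X} exp(S(c,y))` (sum with multiplicity). -/
noncomputable def sE (S : F → F → ℝ) (c : F) (X : Multiset F) : ℝ :=
  (X.map (fun y => Real.exp (S c y))).sum

/-- Subtractive weight: `w(c,x;X) = exp(m(c,x)) * (1 - β * exp(S(c,x)) / E(c,X))`. -/
noncomputable def sw (m S : F → F → ℝ) (β : ℝ) (c : F) (X : Multiset F) (x : F) : ℝ :=
  Real.exp (m c x) * (1 - β * Real.exp (S c x) / sE S c X)

/-- Total subtractive weight `W(c,X)` (sum with multiplicity). -/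
noncomputable def sW (m S : F → F → ℝ) (β : ℝ) (c : F) (X : Multiset F) : ℝ :=
  (X.map (fun y => sw m S β c X y)).sum

/-- Subtractive aggregation `h(g;c,X) = Σ_{x∈X} (w(c,x;X)/W(c,X)) * g(x)`. -/
noncomputable def sh (m S : F → F → ℝ) (β : ℝ) (g : F → ℝ) (c : F) (X : Multiset F) : ℝ :=
  (X.map (fun x => sw m S β c X x / sW m S β c X * g x)).sum


lemma sum_map_toFinset [DecidableEq F] (X : Multiset F) (f : F → ℝ) :
    (X.map f).sum = ∑ x ∈ X.toFinset, (X.count x : ℝ) * f x := by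
  rw [Finset.sum_multiset_map_count]
  simp [nsmul_eq_mul]

lemma sE_pos (S : F → F → ℝ) (c : F) (X : Multiset F) (hX : X ≠ 0) :
    0 < sE S c X := by
  obtain ⟨a, ha⟩ := Multiset.exists_mem_of_ne_zero hX
  unfold sE
  have : ∀ b ∈ X.map (fun y => Real.exp (S c y)), 0 ≤ b := by
    intro b hb
    obtain ⟨y, _, rfl⟩ := Multiset.mem_map.1 hb
    exact (Real.exp_pos _).le
  have hmem : Real.exp (S c a) ∈ X.map (fun y => Real.exp (S c y)) :=
    Multiset.mem_map_of_mem _ ha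
  calc 0 < Real.exp (S c a) := Real.exp_pos _
    _ ≤ _ := Multiset.single_le_sum this _ hmem

lemma sW_pos [DecidableEq F] (m S : F → F → ℝ) (β : ℝ) (c : F) (X : Multiset F)
    (hX : X ≠ 0) (hw : ∀ x ∈ X.toFinset, 0 < sw m S β c X x) :
    0 < sW m S β c X := by
  obtain ⟨a, ha⟩ := Multiset.exists_mem_of_ne_zero hX
  unfold sW
  have hmem : sw m S β c X a ∈ X.map (fun y => sw m S β c X y) :=
    Multiset.mem_map_of_mem _ ha
  have hpos : ∀ b ∈ X.map (fun y => sw m S β c X y), 0 ≤ b := by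
    intro b hb
    obtain ⟨y, hy, rfl⟩ := Multiset.mem_map.1 hb
    exact (hw y (Multiset.mem_toFinset.2 hy)).le
  calc 0 < sw m S β c X a := hw a (Multiset.mem_toFinset.2 ha)
    _ ≤ _ := Multiset.single_le_sum hpos _ hmem

lemma sh_indicator [DecidableEq F] (m S : F → F → ℝ) (β : ℝ) (c : F) (X : Multiset F)
    (x0 : F) :
    sh m S β (fun y => if y = x0 then (1:ℝ) else 0) c X =
      (X.count x0 : ℝ) * (sw m S β c X x0 / sW m S β c X) := by
  unfold sh
  rw [sum_map_toFinset]
  rw [Finset.sum_congr rfl (fun x _ => by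
    show (X.count x : ℝ) * (sw m S β c X x / sW m S β c X * if x = x0 then (1:ℝ) else 0)
      = if x = x0 then (X.count x : ℝ) * (sw m S β c X x / sW m S β c X) else 0
    split <;> simp)]
  rw [Finset.sum_ite_eq' X.toFinset x0]
  split
  · rfl
  · next h =>
    have : X.count x0 = 0 := by
      by_contra hc
      exact h (Multiset.mem_toFinset.2 (Multiset.count_pos.1 (Nat.pos_of_ne_zero hc)))
    simp [this]

theorem subtractive_necessity_proportionality [DecidableEq F]
    (m S : F → F → ℝ) (β : ℝ) (hβ0 : 0 < β) (hβ1 : β ≤ 1)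
    (c : F) (X1 X2 : Multiset F) (hX1 : X1 ≠ 0) (hX2 : X2 ≠ 0)
    (hw1 : ∀ x ∈ X1.toFinset, 0 < sw m S β c X1 x)
    (hw2 : ∀ x ∈ X2.toFinset, 0 < sw m S β c X2 x)
    (hagg : ∀ g : F → ℝ, sh m S β g c X1 = sh m S β g c X2) :
    X1.toFinset = X2.toFinset ∧
      ∃ q : ℝ, 0 < q ∧ ∀ x ∈ X1.toFinset,
        q * (X1.count x : ℝ) * (sE S c X1 - β * Real.exp (S c x)) =
          (X2.count x : ℝ) * (sE S c X2 - β * Real.exp (S c x)) := by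
  have hE1 : 0 < sE S c X1 := sE_pos S c X1 hX1
  have hE2 : 0 < sE S c X2 := sE_pos S c X2 hX2
  have hW1 : 0 < sW m S β c X1 := sW_pos m S β c X1 hX1 hw1
  have hW2 : 0 < sW m S β c X2 := sW_pos m S β c X2 hX2 hw2
  have K : ∀ x : F, (X1.count x : ℝ) * (sw m S β c X1 x / sW m S β c X1)
      = (X2.count x : ℝ) * (sw m S β c X2 x / sW m S β c X2) := by
    intro x
    have := hagg (fun y => if y = x then (1:ℝ) else 0)
    rwa [sh_indicator, sh_indicator] at this
  have hTF : X1.toFinset = X2.toFinset := by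
    ext x
    simp only [Multiset.mem_toFinset]
    constructor
    · intro hx
      have h1 : 0 < (X1.count x : ℝ) * (sw m S β c X1 x / sW m S β c X1) :=
        mul_pos (by exact_mod_cast Multiset.count_pos.2 hx)
          (div_pos (hw1 x (Multiset.mem_toFinset.2 hx)) hW1)
      rw [K x] at h1
      by_contra hc
      rw [Multiset.count_eq_zero_of_notMem hc] at h1
      simp at h1
    · intro hx
      have h1 : 0 < (X2.count x : ℝ) * (sw m S β c X2 x / sW m S β c X2) :=
        mul_pos (by exact_mod_cast Multiset.count_pos.2 hx)
          (div_pos (hw2 x (Multiset.mem_toFinset.2 hx)) hW2)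
      rw [← K x] at h1
      by_contra hc
      rw [Multiset.count_eq_zero_of_notMem hc] at h1
      simp at h1
  refine ⟨hTF, sE S c X2 * sW m S β c X2 / (sE S c X1 * sW m S β c X1),
    div_pos (mul_pos hE2 hW2) (mul_pos hE1 hW1), ?_⟩
  intro x _
  have hK := K x
  unfold sw at hK
  have hE1' := hE1.ne'
  have hE2' := hE2.ne'
  have hW1' := hW1.ne'
  have hW2' := hW2.ne'
  have hexp : Real.exp (m c x) ≠ 0 := (Real.exp_pos _).ne'
  field_simp at hK ⊢
  apply mul_left_cancel₀ hexp
  linear_combination Real.exp (m c x) * hK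

end SAT
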